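/- arXiv:2007.09232 — 3 statements merged into one kernel-verified Lean document; each statement's English description precedes it below -/
import Mathlib

section
/- Suppose cos(α+θ) ≠ 0, cos(α+2θ) ≠ 0, cos(α+3θ) ≠ 0, sin(α+3θ) ≠ 0, and tan(α+θ) ≠ tan(α+3θ). Then the point x_FP = ℓ·(tan(α+θ) − tan(α+2θ))/(tan(α+θ) − tan(α+3θ)) is a fixed point of the three-bounce return map: F(x_FP) = x_FP. -/
open Real

/-- The three-bounce return map of the bouncing robot. -/
noncomputable def bounceMap (ℓ α θ x : ℝ) : ℝ :=
  ((ℓ - x) * Real.tan (π - θ - α) + ℓ * Real.cot (3 * π / 2 - 2 * θ - α)) *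
    Real.tan (3 * π / 2 - α - 3 * θ)

/-! The reduction formulas `tan (π - y) = -tan y`, `cot (3π/2 - y) = tan y` and
`tan (3π/2 - y) = cot y` turn the return map into the affine map
`x ↦ (ℓ tan(α + 2θ) - (ℓ - x) tan(α + θ)) / tan(α + 3θ)`, whose fixed point solves a linear
equation. -/

namespace Real

lemma cot_eq_inv_tan (x : ℝ) : cot x = (tan x)⁻¹ :=
  inv_eq_iff_eq_inv.mp (cot_inv_eq_tan x)

lemma tan_three_pi_div_two_sub (x : ℝ) : tan (3 * π / 2 - x) = (tan x)⁻¹ := by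
  rw [show 3 * π / 2 - x = π / 2 - x + π by ring, tan_add_pi, tan_pi_div_two_sub]

lemma cot_three_pi_div_two_sub (x : ℝ) : cot (3 * π / 2 - x) = tan x := by
  rw [cot_eq_inv_tan, tan_three_pi_div_two_sub, inv_inv]

lemma tan_ne_zero_of_sin_ne_zero_of_cos_ne_zero {x : ℝ} (hs : sin x ≠ 0) (hc : cos x ≠ 0) :
    tan x ≠ 0 := by
  rw [tan_eq_sin_div_cos]
  exact div_ne_zero hs hc

end Real

lemma bounceMap_eq (ℓ α θ x : ℝ) :
    bounceMap ℓ α θ x =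
      (ℓ * tan (α + 2 * θ) - (ℓ - x) * tan (α + θ)) / tan (α + 3 * θ) := by
  rw [bounceMap, show π - θ - α = π - (α + θ) by ring,
    show 3 * π / 2 - 2 * θ - α = 3 * π / 2 - (α + 2 * θ) by ring,
    show 3 * π / 2 - α - 3 * θ = 3 * π / 2 - (α + 3 * θ) by ring,
    tan_pi_sub, cot_three_pi_div_two_sub, tan_three_pi_div_two_sub, div_eq_mul_inv]
  ring

lemma affine_map_fixed_point {ℓ a b c : ℝ} (hc : c ≠ 0) (hac : a ≠ c) :
    (ℓ * b - (ℓ - ℓ * (a - b) / (a - c)) * a) / c = ℓ * (a - b) / (a - c) := by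
  have hac' : a - c ≠ 0 := sub_ne_zero.mpr hac
  field_simp
  ring

theorem bounceMap_fixed_point_general (ℓ α θ : ℝ)
    (h3 : Real.cos (α + 3 * θ) ≠ 0) (h4 : Real.sin (α + 3 * θ) ≠ 0)
    (h5 : Real.tan (α + θ) ≠ Real.tan (α + 3 * θ)) :
    bounceMap ℓ α θ
        (ℓ * (Real.tan (α + θ) - Real.tan (α + 2 * θ)) /
          (Real.tan (α + θ) - Real.tan (α + 3 * θ))) =
      ℓ * (Real.tan (α + θ) - Real.tan (α + 2 * θ)) /
        (Real.tan (α + θ) - Real.tan (α + 3 * θ)) := by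
  rw [bounceMap_eq]
  exact affine_map_fixed_point (tan_ne_zero_of_sin_ne_zero_of_cos_ne_zero h4 h3) h5

theorem bounceMap_fixed_point (ℓ α θ : ℝ)
    (h1 : Real.cos (α + θ) ≠ 0) (h2 : Real.cos (α + 2 * θ) ≠ 0)
    (h3 : Real.cos (α + 3 * θ) ≠ 0) (h4 : Real.sin (α + 3 * θ) ≠ 0)
    (h5 : Real.tan (α + θ) ≠ Real.tan (α + 3 * θ)) :
    bounceMap ℓ α θ
        (ℓ * (Real.tan (α + θ) - Real.tan (α + 2 * θ)) /
          (Real.tan (α + θ) - Real.tan (α + 3 * θ))) =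
      ℓ * (Real.tan (α + θ) - Real.tan (α + 2 * θ)) /
        (Real.tan (α + θ) - Real.tan (α + 3 * θ)) :=
  bounceMap_fixed_point_general ℓ α θ h3 h4 h5
end

section
/- For all real ℓ, α, θ and all real x, x′, the three-bounce return map satisfies |F(x) − F(x′)| = |tan(α+θ)·cot(α+3θ)|·|x − x′|; in particular, when |tan(α+θ)·cot(α+3θ)| < 1 the map F is a contraction of ℝ with contraction constant |tan(α+θ)·cot(α+3θ)|. -/
open Real

theorem Real.tan_three_pi_div_two_sub_s6 (x : ℝ) : tan (3 * π / 2 - x) = cot x := by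
  rw [show 3 * π / 2 - x = π / 2 - x + π by ring, tan_add_pi, tan_pi_div_two_sub,
    tan_inv_eq_cot]

theorem bounceMap_sub (ℓ α θ x x' : ℝ) :
    bounceMap ℓ α θ x - bounceMap ℓ α θ x' = tan (α + θ) * cot (α + 3 * θ) * (x - x') := by
  have h_first : tan (π - θ - α) = -tan (α + θ) := by
    rw [show π - θ - α = π - (α + θ) by ring, tan_pi_sub]
  have h_last : tan (3 * π / 2 - α - 3 * θ) = cot (α + 3 * θ) := by
    rw [show 3 * π / 2 - α - 3 * θ = 3 * π / 2 - (α + 3 * θ) by ring,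
      tan_three_pi_div_two_sub_s6]
  rw [bounceMap, bounceMap, h_first, h_last]
  ring

theorem bounceMap_lipschitz (ℓ α θ : ℝ) :
    (∀ x x' : ℝ, |bounceMap ℓ α θ x - bounceMap ℓ α θ x'| =
      |Real.tan (α + θ) * Real.cot (α + 3 * θ)| * |x - x'|) ∧
    (|Real.tan (α + θ) * Real.cot (α + 3 * θ)| < 1 →
      ContractingWith ⟨|Real.tan (α + θ) * Real.cot (α + 3 * θ)|, abs_nonneg _⟩
        (bounceMap ℓ α θ)) := by
  have h_dist (x x' : ℝ) : |bounceMap ℓ α θ x - bounceMap ℓ α θ x'| =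
      |tan (α + θ) * cot (α + 3 * θ)| * |x - x'| := by
    rw [bounceMap_sub, abs_mul]
  exact ⟨h_dist, fun h_lt => ⟨h_lt, LipschitzWith.of_dist_le_mul fun x x' => (h_dist x x').le⟩⟩
end

section
/- Specializing the rotation angle to θ = π/3: for all real ℓ and α, the derivative of the three-bounce return map F (with θ = π/3) at every point equals tan(α+π/3)·cot α, using the identity cot(α+π) = cot α. -/
open Real

/-! The return map is affine in the impact coordinate, so its derivative is the constant slope
`-tan (π - θ - α) * tan (3π/2 - α - 3θ)`; at `θ = π/3` the reduction formulas `tan (π - y) = -tan y`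
and `tan (π/2 - y) = cot y` turn it into `tan (α + π/3) * cot α`. -/

theorem hasDerivAt_bounceMap (ℓ α θ x : ℝ) :
    HasDerivAt (bounceMap ℓ α θ)
      (-(tan (π - θ - α) * tan (3 * π / 2 - α - 3 * θ))) x := by
  have h := ((((hasDerivAt_id x).const_sub ℓ).mul_const (tan (π - θ - α))).add_const
    (ℓ * cot (3 * π / 2 - 2 * θ - α))).mul_const (tan (3 * π / 2 - α - 3 * θ))
  rw [neg_one_mul, neg_mul] at h
  exact h

theorem deriv_bounceMap (ℓ α θ x : ℝ) :
    deriv (bounceMap ℓ α θ) x = -(tan (π - θ - α) * tan (3 * π / 2 - α - 3 * θ)) :=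
  (hasDerivAt_bounceMap ℓ α θ x).deriv

theorem bounceMap_deriv_equiangular (ℓ α : ℝ) :
    ∀ x : ℝ, deriv (bounceMap ℓ α (π / 3)) x =
      Real.tan (α + π / 3) * Real.cot α := by
  intro x
  have h_first : tan (π - π / 3 - α) = -tan (α + π / 3) := by
    rw [show π - π / 3 - α = π - (α + π / 3) by ring, tan_pi_sub]
  have h_third : tan (3 * π / 2 - α - 3 * (π / 3)) = cot α := by
    rw [show 3 * π / 2 - α - 3 * (π / 3) = π / 2 - α by ring, tan_pi_div_two_sub, tan_inv_eq_cot]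
  rw [deriv_bounceMap, h_first, h_third, neg_mul, neg_neg]
end
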